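/- Let (X,d) be a metric space, o ∈ X, and p a boundary point. Suppose that for every ε > 0, p has well-behaved ε-geodesics: for all z_n, w_n → p and all ε-geodesics γ_n joining z_n to w_n, one has inf_t d(γ_n(t), o) → ∞. Then liminf_{z,w → p} (z|w)_o = ∞, provided that for every pair z,w ∈ X and every ε > 0 there exists an ε-geodesic joining z to w. -/

import Mathlib

/-! If `(z n | w n)_o < C` along a subsequence, follow an `ε/2`-geodesic from `z n` to `o` and
then one from `o` to `w n`. The concatenation has length at most
`d(z n, o) + d(o, w n) + ε < d(z n, w n) + 2C + ε`, so it is a `(2C + ε)`-geodesic; it passes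
through `o`, so its distance to `o` has infimum `0`, contradicting well-behavedness. -/

open Set Filter Topology

section Concat

variable {E : Type*} {γ₁ γ₂ : ℝ → E} {a₁ b₁ a₂ b₂ : ℝ}

/-- `γ₁` up to time `b₁`, followed by `γ₂` translated so that time `b₁` is sent to `a₂`. -/
noncomputable def concatCurve (γ₁ γ₂ : ℝ → E) (b₁ a₂ : ℝ) : ℝ → E :=
  fun t => if t ≤ b₁ then γ₁ t else γ₂ (t - b₁ + a₂)

theorem concatCurve_of_le {t : ℝ} (ht : t ≤ b₁) : concatCurve γ₁ γ₂ b₁ a₂ t = γ₁ t :=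
  if_pos ht

theorem eqOn_concatCurve_right (h : γ₁ b₁ = γ₂ a₂) :
    EqOn (concatCurve γ₁ γ₂ b₁ a₂) (γ₂ ∘ (· - b₁ + a₂)) (Ici b₁) := by
  intro t (ht : b₁ ≤ t)
  rcases ht.eq_or_lt with rfl | ht
  · simp [concatCurve, h]
  · simp [concatCurve, not_le.2 ht]

theorem concatCurve_add_sub (hab₂ : a₂ ≤ b₂) (h : γ₁ b₁ = γ₂ a₂) :
    concatCurve γ₁ γ₂ b₁ a₂ (b₁ + (b₂ - a₂)) = γ₂ b₂ := by
  rw [eqOn_concatCurve_right h (show b₁ ≤ b₁ + (b₂ - a₂) by linarith)]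
  simp

theorem eVariationOn_concatCurve [PseudoEMetricSpace E] (hab₁ : a₁ ≤ b₁) (hab₂ : a₂ ≤ b₂)
    (h : γ₁ b₁ = γ₂ a₂) :
    eVariationOn (concatCurve γ₁ γ₂ b₁ a₂) (Icc a₁ (b₁ + (b₂ - a₂))) =
      eVariationOn γ₁ (Icc a₁ b₁) + eVariationOn γ₂ (Icc a₂ b₂) := by
  have hb : b₁ ≤ b₁ + (b₂ - a₂) := by linarith
  rw [← Icc_union_Icc_eq_Icc hab₁ hb, eVariationOn.union _ (isGreatest_Icc hab₁) (isLeast_Icc hb),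
    eVariationOn.eq_of_eqOn fun t ht => concatCurve_of_le ht.2,
    eVariationOn.eq_of_eqOn ((eqOn_concatCurve_right h).mono Icc_subset_Ici_self),
    eVariationOn.comp_eq_of_monotoneOn _ _ fun x _ y _ hxy => by linarith]
  have hshift : (· - b₁ + a₂) = (· + (a₂ - b₁)) := by ext; ring
  rw [hshift, image_add_const_Icc]
  congr 3 <;> ring

end Concat

theorem exists_curve_through {X : Type*} [PseudoMetricSpace X]
    (hexist : ∀ z w : X, ∀ ε > (0 : ℝ), ∃ (a b : ℝ) (γ : ℝ → X), a ≤ b ∧ γ a = z ∧ γ b = w ∧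
      eVariationOn γ (Icc a b) ≤ ENNReal.ofReal (dist z w + ε))
    (z o w : X) {ε : ℝ} (hε : 0 < ε) :
    ∃ (a b t : ℝ) (γ : ℝ → X), t ∈ Icc a b ∧ γ a = z ∧ γ b = w ∧ γ t = o ∧
      eVariationOn γ (Icc a b) ≤ ENNReal.ofReal (dist z o + dist o w + ε) := by
  obtain ⟨a₁, b₁, γ₁, hab₁, hz, ho₁, hvar₁⟩ := hexist z o (ε / 2) (half_pos hε)
  obtain ⟨a₂, b₂, γ₂, hab₂, ho₂, hw, hvar₂⟩ := hexist o w (ε / 2) (half_pos hε)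
  have hjoin : γ₁ b₁ = γ₂ a₂ := ho₁.trans ho₂.symm
  refine ⟨a₁, b₁ + (b₂ - a₂), b₁, concatCurve γ₁ γ₂ b₁ a₂, ⟨hab₁, by linarith⟩,
    (concatCurve_of_le hab₁).trans hz, (concatCurve_add_sub hab₂ hjoin).trans hw,
    (concatCurve_of_le le_rfl).trans ho₁, ?_⟩
  calc eVariationOn (concatCurve γ₁ γ₂ b₁ a₂) (Icc a₁ (b₁ + (b₂ - a₂)))
      = eVariationOn γ₁ (Icc a₁ b₁) + eVariationOn γ₂ (Icc a₂ b₂) :=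
        eVariationOn_concatCurve hab₁ hab₂ hjoin
    _ ≤ ENNReal.ofReal (dist z o + ε / 2) + ENNReal.ofReal (dist o w + ε / 2) :=
        add_le_add hvar₁ hvar₂
    _ = ENNReal.ofReal (dist z o + dist o w + ε) := by
        rw [← ENNReal.ofReal_add (by positivity) (by positivity)]
        ring_nf

theorem stmt_3 {X T : Type*} [MetricSpace X] [TopologicalSpace T]
    (ι : X → T) (p : T) (o : X)
    (hexist : ∀ z w : X, ∀ ε > (0 : ℝ), ∃ (a b : ℝ) (γ : ℝ → X), a ≤ b ∧ γ a = z ∧ γ b = w ∧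
      eVariationOn γ (Icc a b) ≤ ENNReal.ofReal (dist z w + ε))
    (hwb : ∀ ε > (0 : ℝ), ∀ z w : ℕ → X,
      Tendsto (fun n => ι (z n)) atTop (𝓝 p) → Tendsto (fun n => ι (w n)) atTop (𝓝 p) →
      ∀ (a b : ℕ → ℝ) (γ : ℕ → ℝ → X),
        (∀ n, a n ≤ b n) → (∀ n, γ n (a n) = z n) → (∀ n, γ n (b n) = w n) →
        (∀ n, eVariationOn (γ n) (Icc (a n) (b n)) ≤ ENNReal.ofReal (dist (z n) (w n) + ε)) →
        Tendsto (fun n => ⨅ t : Icc (a n) (b n), dist (γ n t) o) atTop atTop) :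
    ∀ z w : ℕ → X,
      Tendsto (fun n => ι (z n)) atTop (𝓝 p) → Tendsto (fun n => ι (w n)) atTop (𝓝 p) →
      Tendsto (fun n => (dist (z n) o + dist (w n) o - dist (z n) (w n)) / 2) atTop atTop := by
  intro z w hz hw
  by_contra hnot
  obtain ⟨C, hC⟩ :
      ∃ C, ∃ᶠ n in atTop, (dist (z n) o + dist (w n) o - dist (z n) (w n)) / 2 < C := by
    simpa only [tendsto_atTop, not_forall, not_eventually, not_le] using hnot
  obtain ⟨φ, hφ, hφC⟩ := extraction_of_frequently_atTop hC
  have hC₀ : 0 < C := by linarith [hφC 0, dist_triangle_right (z (φ 0)) (w (φ 0)) o]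
  choose a b t γ ht hγa hγb hγt hvar using
    fun k => exists_curve_through hexist (z (φ k)) o (w (φ k)) one_pos
  have hgeod : ∀ k, eVariationOn (γ k) (Icc (a k) (b k)) ≤
      ENNReal.ofReal (dist (z (φ k)) (w (φ k)) + (2 * C + 1)) := fun k =>
    (hvar k).trans <| ENNReal.ofReal_le_ofReal <| by linarith [hφC k, dist_comm o (w (φ k))]
  have hinf := hwb (2 * C + 1) (by positivity) _ _ (hz.comp hφ.tendsto_atTop)
    (hw.comp hφ.tendsto_atTop) a b γ (fun k => (ht k).1.trans (ht k).2) hγa hγb hgeod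
  obtain ⟨k, hk⟩ := (hinf.eventually_gt_atTop 0).exists
  have hle : ⨅ s : Icc (a k) (b k), dist (γ k s) o ≤ 0 :=
    (ciInf_le ⟨0, by rintro _ ⟨s, rfl⟩; exact dist_nonneg⟩ ⟨t k, ht k⟩).trans_eq (by simp [hγt k])
  exact hle.not_gt hk
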